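/- Let k ≥ 2 be an even integer and let v = (v₁,…,v_k) ∈ ℝ^k satisfy 0 ≤ v₁ ≤ ⋯ ≤ v_k ≤ 1, with mean v̄ = (1/k)Σᵢvᵢ and median v_med = (v_{k/2} + v_{k/2+1})/2. Let PG = (1/k) Σᵢ₌₁^k |vᵢ + v_{k+1−i} − 2v̄| and MM = v_med − v̄. Then PG ≥ (8/k)·|MM|. -/

import Mathlib

/-! The paired deviations `xᵢ = vᵢ + v_{k+1−i} − 2v̄` sum to zero, and the two middle indices
`k/2` and `k/2 + 1` are paired with each other, each giving `xᵢ = 2·MM`. A zero-sum family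
has total absolute value at least twice the absolute value of any partial sum, so
`Σ |xᵢ| ≥ 2·|4·MM| = 8·|MM|`. -/

open Finset

theorem two_mul_norm_sum_le_sum_norm_of_sum_eq_zero {ι E : Type*} [Fintype ι] [DecidableEq ι]
    [SeminormedAddCommGroup E] {x : ι → E} (hx : ∑ i, x i = 0) (s : Finset ι) :
    2 * ‖∑ i ∈ s, x i‖ ≤ ∑ i, ‖x i‖ := by
  have hcompl : ∑ i ∈ sᶜ, x i = -∑ i ∈ s, x i :=
    eq_neg_of_add_eq_zero_right ((sum_add_sum_compl s x).trans hx)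
  calc 2 * ‖∑ i ∈ s, x i‖ = ‖∑ i ∈ s, x i‖ + ‖∑ i ∈ sᶜ, x i‖ := by
        rw [hcompl, norm_neg, two_mul]
    _ ≤ ∑ i ∈ s, ‖x i‖ + ∑ i ∈ sᶜ, ‖x i‖ := add_le_add (norm_sum_le _ _) (norm_sum_le _ _)
    _ = ∑ i, ‖x i‖ := sum_add_sum_compl s _

theorem Fin.sum_add_rev_sub_two_mul_mean {k : ℕ} (v : Fin k → ℝ) :
    ∑ i, (v i + v i.rev - 2 * ((∑ j, v j) / k)) = 0 := by
  rcases k.eq_zero_or_pos with rfl | hk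
  · simp
  rw [sum_sub_distrib, sum_add_distrib,
    Fintype.sum_equiv Fin.revPerm (fun i => v i.rev) v fun _ => rfl, sum_const,
    nsmul_eq_mul]
  field_simp
  ring

/-- for even `k ≥ 2`, the partisan Gini score
`PG = (1/k) Σᵢ |vᵢ + v_{k+1−i} − 2v̄|` satisfies `PG ≥ (8/k)·|MM|`
where `MM = v_med − v̄`. -/
theorem partisan_gini_lower_bound_even
    (k : ℕ) (hk : 2 ≤ k) (heven : k % 2 = 0) (v : Fin k → ℝ)
    (vbar : ℝ) (hvbar : vbar = (∑ i, v i) / k)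
    (vmed : ℝ) (hvmed : vmed = (v ⟨k / 2 - 1, by omega⟩ + v ⟨k / 2, by omega⟩) / 2)
    (PG : ℝ) (hPG : PG = (1 / k) * ∑ i, |v i + v i.rev - 2 * vbar|)
    (MM : ℝ) (hMM : MM = vmed - vbar) :
    PG ≥ (8 / k) * |MM| := by
  set lo : Fin k := ⟨k / 2 - 1, by omega⟩
  set hi : Fin k := ⟨k / 2, by omega⟩
  set x : Fin k → ℝ := fun i => v i + v i.rev - 2 * vbar
  have hrev : lo.rev = hi := by
    ext
    simp only [lo, hi, Fin.val_rev]
    omega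
  have hne : lo ≠ hi := by simp only [lo, hi, ne_eq, Fin.mk.injEq]; omega
  have hmiddle : ∑ i ∈ {lo, hi}, x i = 4 * MM := by
    rw [sum_pair hne]
    have hrev' : hi.rev = lo := by rw [← hrev, Fin.rev_rev]
    simp only [x, hrev, hrev', hMM, hvmed]
    ring
  have hx : ∑ i, x i = 0 := by
    simpa only [x, hvbar] using Fin.sum_add_rev_sub_two_mul_mean v
  calc PG = 1 / k * ∑ i, ‖x i‖ := hPG
    _ ≥ 1 / k * (2 * ‖∑ i ∈ {lo, hi}, x i‖) := by
        gcongr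
        exact two_mul_norm_sum_le_sum_norm_of_sum_eq_zero hx _
    _ = 8 / k * |MM| := by
        rw [hmiddle, Real.norm_eq_abs, abs_mul, abs_of_pos four_pos]
        ring
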